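/- arXiv:1105.1824 — 2 statements merged into one kernel-verified Lean document; each statement's English description precedes it below -/
import Mathlib

section
/- For any B-hedonic game, there exists an individually stable partition. Specifically, letting B* be the largest set constructed by iteratively removing players who like no remaining player (start with B = ∅; repeatedly add to B any player who likes no player in N \ B), the partition consisting of the coalition N \ B* together with singletons {i} for each i ∈ B* is individually stable. -/
open Finset

/-- A partition of the player set into coalitions: `part i` is the coalition
containing player `i`. -/
structure HPartition (N : Type*) where
  part : N → Finset N
  mem_self : ∀ i, i ∈ part i
  eq_of_mem : ∀ i j : N, j ∈ part i → part j = part i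

section Defs

variable {N : Type*} [DecidableEq N]

/-- Strict part of a weak preference over coalitions. -/
def SPref (pref : N → Finset N → Finset N → Prop) (i : N) (S T : Finset N) : Prop :=
  pref i S T ∧ ¬ pref i T S

/-- `S` is an (existing or empty) coalition of the partition `π`. -/
def IsCoalitionOf (π : HPartition N) (S : Finset N) : Prop :=
  S = ∅ ∨ ∃ j, S = π.part j

/-- Nash stability: no player strictly prefers joining another existing
(possibly empty) coalition. -/
def NashStable (pref : N → Finset N → Finset N → Prop) (π : HPartition N) : Prop :=
  ∀ i S, IsCoalitionOf π S → S ≠ π.part i →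
    ¬ SPref pref i (insert i S) (π.part i)

/-- Individual stability: no strictly improving move that all members of the
joined coalition weakly approve. -/
def IndStable (pref : N → Finset N → Finset N → Prop) (π : HPartition N) : Prop :=
  ∀ i S, IsCoalitionOf π S → S ≠ π.part i →
    ¬ (SPref pref i (insert i S) (π.part i) ∧ ∀ j ∈ S, pref j (insert i S) S)

/-- Contractual individual stability: no strictly improving move approved by the
joined coalition and by the abandoned coalition. -/
def ContIndStable (pref : N → Finset N → Finset N → Prop) (π : HPartition N) : Prop :=
  ∀ i S, IsCoalitionOf π S → S ≠ π.part i →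
    ¬ (SPref pref i (insert i S) (π.part i) ∧ (∀ j ∈ S, pref j (insert i S) S) ∧
        (∀ j ∈ π.part i, j ≠ i → pref j ((π.part i).erase i) (π.part i)))

/-- Individual rationality: everyone weakly prefers his coalition to being alone. -/
def IndRational (pref : N → Finset N → Finset N → Prop) (π : HPartition N) : Prop :=
  ∀ i, pref i (π.part i) {i}

/-- A CIS deviation from `π` to `π'`: player `i` moves to the (possibly empty)
existing coalition `T`, strictly improving, while no member of `T` nor of the
abandoned coalition is worse off. -/
def CISDeviation (pref : N → Finset N → Finset N → Prop) (π π' : HPartition N) : Prop :=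
  ∃ i T, IsCoalitionOf π T ∧ T ≠ π.part i ∧ i ∉ T ∧
    SPref pref i (insert i T) (π.part i) ∧
    (∀ j ∈ T, pref j (insert i T) T) ∧
    (∀ j ∈ π.part i, j ≠ i → pref j ((π.part i).erase i) (π.part i)) ∧
    (∀ k, π'.part k = if k = i ∨ k ∈ T then insert i T else (π.part k).erase i)

/-- The weak relation associated with a (primitive) strict relation. -/
def weakOf (sp : N → Finset N → Finset N → Prop) (i : N) (S T : Finset N) : Prop :=
  ¬ sp i T S

/-- Strict part of a weak preference over players. -/
def strictP (p : N → N → N → Prop) (i j k : N) : Prop := p i j k ∧ ¬ p i k j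

/-- Player `j` is unacceptable to `i`: `i ≻ᵢ j`. -/
def unacc (p : N → N → N → Prop) (i j : N) : Prop := strictP p i i j

/-- Player `i` likes `j`: `j ≻ᵢ i`. -/
def likes (p : N → N → N → Prop) (i j : N) : Prop := strictP p i j i

/-- Each player's preference over players is a complete preorder. -/
def CompletePreorder (p : N → N → N → Prop) : Prop :=
  (∀ i j k, p i j k ∨ p i k j) ∧ (∀ i a b c, p i a b → p i b c → p i a c)

/-- The set of `≿ᵢ`-maximal elements of `J`, with `max ∅ = {i}`. -/
def maxSet (p : N → N → N → Prop) (i : N) (J : Finset N) : Set N :=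
  if J = ∅ then {i} else {m | m ∈ J ∧ ∀ j ∈ J, p i m j}

/-- The set of `≿ᵢ`-minimal elements of `J`, with `min ∅ = {i}`. -/
def minSet (p : N → N → N → Prop) (i : N) (J : Finset N) : Set N :=
  if J = ∅ then {i} else {m | m ∈ J ∧ ∀ j ∈ J, p i j m}

/-- W-hedonic (weak) preference over coalitions: compare worst members. -/
def WPref (p : N → N → N → Prop) (i : N) (S T : Finset N) : Prop :=
  ∀ s ∈ minSet p i (S.erase i), ∀ t ∈ minSet p i (T.erase i), p i s t

/-- WW-hedonic (weak) preference over coalitions. -/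
def WWPref (p : N → N → N → Prop) (i : N) (S T : Finset N) : Prop :=
  (∃ j ∈ T.erase i, unacc p i j) ∨ WPref p i S T

/-- BB-hedonic (weak) preference over coalitions. -/
def BBPref (p : N → N → N → Prop) (i : N) (S T : Finset N) : Prop :=
  (∃ j ∈ T.erase i, unacc p i j) ∨
    ((∀ j ∈ S.erase i, ¬ unacc p i j) ∧ (∀ j ∈ T.erase i, ¬ unacc p i j) ∧
      ∀ s ∈ maxSet p i (S.erase i), ∀ t ∈ maxSet p i (T.erase i), p i s t)

/-- B-hedonic strict preference over coalitions: better best member, or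
indifferent best members and smaller size. -/
def BStrict (p : N → N → N → Prop) (i : N) (S T : Finset N) : Prop :=
  (∀ s ∈ maxSet p i (S.erase i), ∀ t ∈ maxSet p i (T.erase i), strictP p i s t) ∨
    ((∀ s ∈ maxSet p i (S.erase i), ∀ t ∈ maxSet p i (T.erase i), p i s t ∧ p i t s) ∧
      S.card < T.card)

/-- B-hedonic weak preference over coalitions. -/
def BWeak (p : N → N → N → Prop) : N → Finset N → Finset N → Prop :=
  weakOf (BStrict p)

end Defs

/-!
Write `U = N \ B*`. Since `B*` is closed, every member of `U` likes somebody else in `U`; since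
it is least, no nonempty `T ⊆ B*` can be removed from it, i.e. some member of `T` likes nobody
outside `B* \ T`. Taking `T = {i}` and `T = {i, k}`: members of `B*` like nobody in `U`, and no
two members of `B*` like each other. Under B-preferences a lone player only moves to join
someone he likes, nobody leaves a coalition containing someone he likes to be alone, and the
owner `j` of a singleton `{j}` accepts `i` only if `j` likes `i`. Hence a member of `B*` has
nowhere to go, and a member of `U` could only leave for a singleton of `B*`, which refuses him.
-/

open Finset

section Preferences

variable {N : Type*} {p : N → N → N → Prop} {B : Finset N} {i j : N}

theorem HPartition.notMem_part_of_ne (π : HPartition N) (h : π.part j ≠ π.part i) :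
    i ∉ π.part j :=
  fun hi => h (π.eq_of_mem j i hi).symm

theorem CompletePreorder.refl (hp : CompletePreorder p) (i j : N) : p i j j :=
  (hp.1 i j j).elim id id

theorem CompletePreorder.trans (hp : CompletePreorder p) {i a b c : N} :
    p i a b → p i b c → p i a c :=
  hp.2 i a b c

/-- `B` is closed under the removal step that builds `B*`. -/
def AbsorbsNonLikers (p : N → N → N → Prop) (B : Finset N) : Prop :=
  ∀ i, (∀ j, j ∉ B → j ≠ i → ¬ likes p i j) → i ∈ B

theorem AbsorbsNonLikers.exists_likes_of_notMem (hB : AbsorbsNonLikers p B) (hi : i ∉ B) :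
    ∃ j ∉ B, j ≠ i ∧ likes p i j := by
  by_contra! h
  exact hi (hB i h)

end Preferences

section BHedonic

variable {N : Type*} [DecidableEq N] {p : N → N → N → Prop} {B S T : Finset N} {i j k s : N}

theorem AbsorbsNonLikers.exists_mem_forall_not_likes (hB : AbsorbsNonLikers p B)
    (hmin : ∀ B', AbsorbsNonLikers p B' → B ⊆ B') (hT : (B ∩ T).Nonempty) :
    ∃ m ∈ T, ∀ j, j ∉ B \ T → j ≠ m → ¬ likes p m j := by
  obtain ⟨i, hi⟩ := hT
  rw [mem_inter] at hi
  have hnot : ¬ AbsorbsNonLikers p (B \ T) := fun h =>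
    (mem_sdiff.1 (hmin _ h hi.1)).2 hi.2
  simp only [AbsorbsNonLikers, not_forall, exists_prop] at hnot
  obtain ⟨m, hm, hmT⟩ := hnot
  have hmB : m ∈ B := hB m fun j hj => hm j fun h => hj (mem_sdiff.1 h).1
  exact ⟨m, by simpa [hmB] using hmT, hm⟩

theorem AbsorbsNonLikers.not_likes_of_mem_of_notMem (hB : AbsorbsNonLikers p B)
    (hmin : ∀ B', AbsorbsNonLikers p B' → B ⊆ B') (hi : i ∈ B) (hj : j ∉ B)
    (hji : j ≠ i) :
    ¬ likes p i j := by
  obtain ⟨m, hm, hnot⟩ := hB.exists_mem_forall_not_likes hmin (T := {i}) ⟨i, by simp [hi]⟩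
  rw [mem_singleton] at hm
  subst hm
  exact hnot j (fun h => hj (mem_sdiff.1 h).1) hji

theorem AbsorbsNonLikers.not_likes_and_likes_of_mem (hB : AbsorbsNonLikers p B)
    (hmin : ∀ B', AbsorbsNonLikers p B' → B ⊆ B') (hi : i ∈ B) (hk : k ∈ B)
    (hik : i ≠ k) :
    ¬ (likes p i k ∧ likes p k i) := by
  rintro ⟨hlik, hlki⟩
  obtain ⟨m, hm, hnot⟩ :=
    hB.exists_mem_forall_not_likes hmin (T := {i, k}) ⟨i, by simp [hi]⟩
  have hout : ∀ j ∈ ({i, k} : Finset N), j ∉ B \ {i, k} := fun j hj h => (mem_sdiff.1 h).2 hj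
  rcases mem_insert.1 hm with rfl | hm
  · exact hnot k (hout k (by simp)) hik.symm hlik
  · rw [mem_singleton] at hm
    subst hm
    exact hnot i (hout i (by simp)) hik hlki

theorem maxSet_empty (p : N → N → N → Prop) (i : N) : maxSet p i ∅ = {i} :=
  if_pos rfl

theorem mem_maxSet_iff {J : Finset N} (hJ : J.Nonempty) :
    s ∈ maxSet p i J ↔ s ∈ J ∧ ∀ l ∈ J, p i s l := by
  rw [maxSet, if_neg hJ.ne_empty]
  rfl

theorem maxSet_singleton (hp : CompletePreorder p) (i j : N) : maxSet p i {j} = {j} := by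
  ext m
  rw [mem_maxSet_iff (singleton_nonempty j)]
  simp only [mem_singleton, forall_eq, Set.mem_singleton_iff, and_iff_left_iff_imp]
  rintro rfl
  exact hp.refl i m

theorem exists_forall_pref (hp : CompletePreorder p) (i : N) {J : Finset N} (hJ : J.Nonempty) :
    ∃ m ∈ J, ∀ l ∈ J, p i m l := by
  induction hJ using Nonempty.cons_induction with
  | singleton a => exact ⟨a, mem_singleton_self a, by simpa using hp.refl i a⟩
  | cons a J _ _ ih =>
    obtain ⟨m, hm, hmax⟩ := ih
    rcases hp.1 i a m with ham | hma
    · exact ⟨a, mem_cons_self a J, by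
        simpa [hp.refl] using fun l hl => hp.trans ham (hmax l hl)⟩
    · exact ⟨m, mem_cons_of_mem hm, by simpa [hma] using hmax⟩

theorem maxSet_nonempty (hp : CompletePreorder p) (i : N) (J : Finset N) :
    (maxSet p i J).Nonempty := by
  rcases J.eq_empty_or_nonempty with rfl | hJ
  · rw [maxSet_empty]
    exact Set.singleton_nonempty i
  · obtain ⟨m, hm⟩ := exists_forall_pref hp i hJ
    exact ⟨m, (mem_maxSet_iff hJ).2 hm⟩

theorem self_mem_maxSet_erase_singleton (p : N → N → N → Prop) (i : N) :
    i ∈ maxSet p i (({i} : Finset N).erase i) := by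
  rw [erase_singleton, maxSet_empty]
  rfl

theorem BStrict.pref {t : N} (h : BStrict p i S T) (hs : s ∈ maxSet p i (S.erase i))
    (ht : t ∈ maxSet p i (T.erase i)) : p i s t :=
  h.elim (fun h => (h s hs t ht).1) fun h => (h.1 s hs t ht).1

theorem not_bStrict_self (hp : CompletePreorder p) : ¬ BStrict p i S S := by
  obtain ⟨s, hs⟩ := maxSet_nonempty hp i (S.erase i)
  rintro (h | ⟨-, h⟩)
  · exact (h s hs s hs).2 (h s hs s hs).1
  · exact lt_irrefl _ h

theorem likes_of_bStrict_insert_singleton (h : BStrict p i (insert i S) {i})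
    (hs : s ∈ maxSet p i ((insert i S).erase i)) : likes p i s := by
  rcases h with h | ⟨-, h⟩
  · exact h s hs i (self_mem_maxSet_erase_singleton p i)
  · have := card_pos.2 (insert_nonempty i S)
    rw [card_singleton] at h
    omega

theorem not_bStrict_singleton_of_likes (hp : CompletePreorder p) (hj : j ∈ T) (hji : j ≠ i)
    (hlike : likes p i j) : ¬ BStrict p i {i} T := by
  intro h
  have hjT : j ∈ T.erase i := mem_erase.2 ⟨hji, hj⟩
  obtain ⟨m, hm, hmax⟩ := exists_forall_pref hp i ⟨j, hjT⟩
  have him : p i i m :=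
    h.pref (self_mem_maxSet_erase_singleton p i) ((mem_maxSet_iff ⟨j, hjT⟩).2 ⟨hm, hmax⟩)
  exact hlike.2 (hp.trans him (hmax j hjT))

theorem bStrict_singleton_insert_of_not_likes (hp : CompletePreorder p) (hik : i ≠ k)
    (h : ¬ likes p k i) : BStrict p k {k} (insert i {k}) := by
  have hk : (insert i {k} : Finset N).erase k = {i} := by
    rw [erase_insert_of_ne hik, erase_singleton]
    rfl
  simp only [BStrict, erase_singleton, hk, maxSet_empty, maxSet_singleton hp,
    Set.mem_singleton_iff, forall_eq, card_singleton,
    card_insert_of_notMem (mem_singleton.not.2 hik)]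
  unfold likes strictP at h
  unfold strictP
  by_cases hki : p k i k
  · exact Or.inr ⟨⟨not_not.1 fun h' => h ⟨hki, h'⟩, hki⟩, by omega⟩
  · exact Or.inl ⟨(hp.1 k k i).resolve_right hki, hki⟩

end BHedonic

section Partition

variable {N : Type*} [DecidableEq N] [Fintype N] {p : N → N → N → Prop} {B S : Finset N}
  {i j : N}

def HPartition.isolate (B : Finset N) : HPartition N where
  part i := if i ∈ B then {i} else univ \ B
  mem_self i := by by_cases h : i ∈ B <;> simp [h]
  eq_of_mem i j hj := by
    by_cases hi : i ∈ B
    · simp only [if_pos hi, mem_singleton] at hj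
      rw [hj]
    · simp only [hi, if_false, mem_sdiff, mem_univ, true_and] at hj
      simp [hi, hj]

open HPartition

theorem isolate_part_of_mem (hi : i ∈ B) : (isolate B).part i = {i} :=
  if_pos hi

theorem isolate_part_of_notMem (hi : i ∉ B) : (isolate B).part i = univ \ B :=
  if_neg hi

theorem isolate_no_deviation_of_mem (hp : CompletePreorder p) (hB : AbsorbsNonLikers p B)
    (hmin : ∀ B', AbsorbsNonLikers p B' → B ⊆ B') (hi : i ∈ B)
    (hS : IsCoalitionOf (isolate B) S) (hSi : S ≠ (isolate B).part i)
    (hbetter : BStrict p i (insert i S) ((isolate B).part i))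
    (happrove : ∀ j ∈ S, BWeak p j (insert i S) S) : False := by
  rw [isolate_part_of_mem hi] at hbetter
  rcases hS with rfl | ⟨j, rfl⟩
  · exact not_bStrict_self hp (by simpa using hbetter)
  · have hij : i ∉ (isolate B).part j := (isolate B).notMem_part_of_ne hSi
    have hne : ((isolate B).part j).Nonempty := ⟨j, (isolate B).mem_self j⟩
    obtain ⟨m, hm, hmax⟩ := exists_forall_pref hp i hne
    have hlike : likes p i m := likes_of_bStrict_insert_singleton hbetter <| by
      rw [erase_insert hij, mem_maxSet_iff hne]
      exact ⟨hm, hmax⟩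
    have hmi : m ≠ i := fun h => hij (h ▸ hm)
    by_cases hmB : m ∈ B
    · rw [← (isolate B).eq_of_mem j m hm, isolate_part_of_mem hmB] at happrove
      have hback : likes p m i := not_not.1 fun h =>
        happrove m (mem_singleton_self m) (bStrict_singleton_insert_of_not_likes hp hmi.symm h)
      exact hB.not_likes_and_likes_of_mem hmin hi hmB hmi.symm ⟨hlike, hback⟩
    · exact hB.not_likes_of_mem_of_notMem hmin hi hmB hmi hlike

theorem isolate_no_deviation_of_notMem (hp : CompletePreorder p) (hB : AbsorbsNonLikers p B)
    (hmin : ∀ B', AbsorbsNonLikers p B' → B ⊆ B') (hi : i ∉ B)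
    (hS : IsCoalitionOf (isolate B) S) (hSi : S ≠ (isolate B).part i)
    (hbetter : BStrict p i (insert i S) ((isolate B).part i))
    (happrove : ∀ j ∈ S, BWeak p j (insert i S) S) : False := by
  rw [isolate_part_of_notMem hi] at hbetter hSi
  obtain ⟨l, hl, hli, hlike⟩ := hB.exists_likes_of_notMem hi
  rcases hS with rfl | ⟨j, rfl⟩
  · exact not_bStrict_singleton_of_likes hp (mem_sdiff.2 ⟨mem_univ l, hl⟩) hli hlike
      (by simpa using hbetter)
  · by_cases hj : j ∈ B
    · rw [isolate_part_of_mem hj] at happrove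
      have hij : i ≠ j := fun h => hi (h ▸ hj)
      exact happrove j (mem_singleton_self j) (bStrict_singleton_insert_of_not_likes hp hij
        (hB.not_likes_of_mem_of_notMem hmin hj hi hij))
    · exact hSi (isolate_part_of_notMem hj)

theorem indStable_isolate (hp : CompletePreorder p) (hB : AbsorbsNonLikers p B)
    (hmin : ∀ B', AbsorbsNonLikers p B' → B ⊆ B') : IndStable (BWeak p) (isolate B) := by
  rintro i S hS hSi ⟨⟨-, hbetter⟩, happrove⟩
  replace hbetter := not_not.1 hbetter
  by_cases hi : i ∈ B
  · exact isolate_no_deviation_of_mem hp hB hmin hi hS hSi hbetter happrove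
  · exact isolate_no_deviation_of_notMem hp hB hmin hi hS hSi hbetter happrove

end Partition

/-- every B-hedonic game has an individually stable partition;
specifically, with `Bstar` the least set closed under removing players who like
no remaining player, the partition consisting of `N \ Bstar` together with
singletons for the members of `Bstar` is individually stable. -/
theorem b_is_exists {N : Type*} [DecidableEq N] [Fintype N]
    (p : N → N → N → Prop) (hp : CompletePreorder p)
    (Bstar : Finset N)
    (hclosed : ∀ i, (∀ j, j ∉ Bstar → j ≠ i → ¬ likes p i j) → i ∈ Bstar)
    (hleast : ∀ B : Finset N,
      (∀ i, (∀ j, j ∉ B → j ≠ i → ¬ likes p i j) → i ∈ B) → Bstar ⊆ B) :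
    ∃ π : HPartition N,
      (∀ i, π.part i = if i ∈ Bstar then {i} else Finset.univ \ Bstar) ∧
      IndStable (BWeak p) π :=
  ⟨HPartition.isolate Bstar, fun _ => rfl, indStable_isolate hp hclosed hleast⟩
end

section
/- In a B-hedonic game satisfying the unique favorite property, let A be the set of players who like no other player. If A is nonempty and every player j ∉ A has his unique favorite player in N \ A, then the partition {N \ A} ∪ {{i} : i ∈ A} is Nash stable. -/
open Finset

lemma exists_max_of_cp {N : Type*} [DecidableEq N] {p : N → N → N → Prop}
    (hp : CompletePreorder p) (i : N) (J : Finset N) (hJ : J.Nonempty) :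
    ∃ m ∈ J, ∀ j ∈ J, p i m j := by
  revert hJ
  refine Finset.induction_on J (fun h => absurd h (by simp)) ?_
  intro b t hbt ih _
  rcases t.eq_empty_or_nonempty with rfl | hne
  · refine ⟨b, by simp, ?_⟩
    intro j hj
    simp only [Finset.mem_insert, Finset.notMem_empty, or_false] at hj
    subst hj
    rcases hp.1 i j j with h | h <;> exact h
  · obtain ⟨m, hm, hmax⟩ := ih hne
    rcases hp.1 i b m with h | h
    · refine ⟨b, by simp, ?_⟩
      intro j hj
      rcases Finset.mem_insert.1 hj with rfl | hj
      · rcases hp.1 i j j with h' | h' <;> exact h'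
      · exact hp.2 i b m j h (hmax j hj)
    · refine ⟨m, Finset.mem_insert_of_mem hm, ?_⟩
      intro j hj
      rcases Finset.mem_insert.1 hj with rfl | hj
      · exact h
      · exact hmax j hj

lemma mem_maxSet_of_cp {N : Type*} [DecidableEq N] {p : N → N → N → Prop}
    (hp : CompletePreorder p) (i : N) (J : Finset N) :
    ∃ m ∈ maxSet p i J, (J = ∅ → m = i) ∧ (J ≠ ∅ → m ∈ J ∧ ∀ j ∈ J, p i m j) := by
  rcases J.eq_empty_or_nonempty with rfl | hne
  · exact ⟨i, by simp [maxSet], fun _ => rfl, by simp⟩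
  · obtain ⟨m, hm, hmax⟩ := exists_max_of_cp hp i J hne
    refine ⟨m, ?_, fun h => absurd h hne.ne_empty, fun _ => ⟨hm, hmax⟩⟩
    simp [maxSet, hne.ne_empty]
    exact ⟨hm, hmax⟩

/-- B-hedonic game with the unique favorite property; if `A` (the
set of players liking nobody) is nonempty and every player outside `A` has his
unique favorite outside `A`, then `{N \ A} ∪ {{i} : i ∈ A}` is Nash stable. -/
theorem b_fav_out_A_ns {N : Type*} [DecidableEq N] [Fintype N]
    (p : N → N → N → Prop) (hp : CompletePreorder p)
    (hUF : ∀ i : N, (∃ j, j ≠ i ∧ likes p i j) →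
      ∃! f, f ≠ i ∧ ∀ k, k ≠ i → p i f k)
    (A : Finset N) (hA : ∀ i, i ∈ A ↔ ∀ j, j ≠ i → ¬ likes p i j)
    (hAne : A.Nonempty)
    (hfav : ∀ j, j ∉ A → ∃ f, f ≠ j ∧ f ∉ A ∧ ∀ k, k ≠ j → p j f k) :
    ∃ π : HPartition N,
      (∀ i, π.part i = if i ∈ A then {i} else Finset.univ \ A) ∧
      NashStable (BWeak p) π := by
  classical
  refine ⟨⟨fun i => if i ∈ A then {i} else Finset.univ \ A, ?_, ?_⟩, fun i => rfl, ?_⟩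
  · intro i
    by_cases hi : i ∈ A <;> simp [hi]
  · intro i j hj
    by_cases hi : i ∈ A <;> simp [hi] at hj
    · subst hj; rfl
    · simp [hj, hi]
  · -- Nash stability
    intro i S hS hSne hdev
    obtain ⟨_, h2⟩ := hdev
    apply h2
    set Pi : Finset N := if i ∈ A then {i} else Finset.univ \ A with hPi
    show ¬ BStrict p i (insert i S) Pi
    have hrefl : ∀ a : N, p i a a := fun a => (hp.1 i a a).elim id id
    by_cases hi : i ∈ A
    · -- i alone; moving anywhere is not strictly better
      have hPieq : Pi = {i} := by simp [hPi, hi]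
      have hili : ∀ j, j ≠ i → p i i j := by
        intro j hj
        have := (hA i).1 hi j hj
        rcases hp.1 i i j with h | h
        · exact h
        · by_contra hc; exact this ⟨h, hc⟩
      have hYerase : Pi.erase i = ∅ := by simp [hPieq]
      have hti : i ∈ maxSet p i (Pi.erase i) := by simp [maxSet, hYerase]
      intro hB
      rcases hB with hB | ⟨_, hcard⟩
      · obtain ⟨m, hm, hprop⟩ := mem_maxSet_of_cp hp i ((insert i S).erase i)
        have := hB m hm i hti
        rcases eq_or_ne ((insert i S).erase i) ∅ with he | he
        · rw [hprop.1 he] at this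
          exact this.2 (hrefl i)
        · obtain ⟨hmJ, _⟩ := hprop.2 he
          have hmne : m ≠ i := Finset.ne_of_mem_erase hmJ
          exact this.2 (hili m hmne)
      · rw [hPieq] at hcard
        simp only [Finset.card_singleton] at hcard
        have : 1 ≤ (insert i S).card := Finset.card_pos.2 ⟨i, Finset.mem_insert_self i S⟩
        omega
    · -- i is in univ \ A
      have hPieq : Pi = Finset.univ \ A := by simp [hPi, hi]
      -- i's favorite
      obtain ⟨f, hfne, hfA, hfav'⟩ := hfav i hi
      have hlikes : ∃ j, j ≠ i ∧ likes p i j := by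
        have := (hA i).not.1 hi
        push_neg at this
        obtain ⟨j, hj1, hj2⟩ := this
        exact ⟨j, hj1, hj2⟩
      obtain ⟨j0, hj0ne, hj0p, hj0np⟩ := hlikes
      have hnif : ¬ p i i f := fun h => hj0np (hp.2 i i f j0 h (hfav' j0 hj0ne))
      -- f is in maxSet of Pi.erase i
      have hfmem : f ∈ Pi.erase i := by
        rw [hPieq]
        exact Finset.mem_erase.2 ⟨hfne, Finset.mem_sdiff.2 ⟨Finset.mem_univ f, hfA⟩⟩
      have hfmax : f ∈ maxSet p i (Pi.erase i) := by
        have hne : Pi.erase i ≠ ∅ := Finset.ne_empty_of_mem hfmem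
        simp only [maxSet, hne, if_neg hne, Set.mem_setOf_eq]
        exact ⟨hfmem, fun j hj => hfav' j (Finset.ne_of_mem_erase hj)⟩
      -- possible S's: ∅ or {a} with a ∈ A
      have hScase : S = ∅ ∨ ∃ a ∈ A, S = {a} := by
        rcases hS with rfl | ⟨k, rfl⟩
        · exact Or.inl rfl
        · by_cases hk : k ∈ A
          · exact Or.inr ⟨k, hk, by simp [hk]⟩
          · exfalso; apply hSne
            show (if k ∈ A then _ else _) = if i ∈ A then _ else _
            rw [if_neg hk, if_neg hi]
      intro hB
      rcases hScase with rfl | ⟨a, haA, rfl⟩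
      · -- moving to empty: X = {i}
        have hXe : (insert i (∅ : Finset N)).erase i = ∅ := by simp
        have hsi : i ∈ maxSet p i ((insert i (∅ : Finset N)).erase i) := by
          simp [maxSet, hXe]
        rcases hB with hB | ⟨hB, _⟩
        · exact hnif (hB i hsi f hfmax).1
        · exact hnif (hB i hsi f hfmax).1
      · -- moving to {a}, a ∈ A
        have hane : a ≠ i := by rintro rfl; exact hi haA
        have hXe : (insert i ({a} : Finset N)).erase i = {a} := by
          rw [Finset.erase_insert (by simp [Ne.symm hane])]
        have hsa : a ∈ maxSet p i ((insert i ({a} : Finset N)).erase i) := by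
          rw [hXe, maxSet, if_neg (Finset.singleton_ne_empty a)]
          refine ⟨Finset.mem_singleton_self a, ?_⟩
          intro j hj
          rw [Finset.mem_singleton] at hj
          rw [hj]
          exact hrefl a
        have hpfa : p i f a := hfav' a hane
        rcases hB with hB | ⟨hB, _⟩
        · exact (hB a hsa f hfmax).2 hpfa
        · -- indifference a ~ f contradicts uniqueness
          obtain ⟨hpaf, _⟩ := hB a hsa f hfmax
          obtain ⟨f', hf', huniq⟩ := hUF i ⟨j0, hj0ne, hj0p, hj0np⟩
          have haprop : a ≠ i ∧ ∀ k, k ≠ i → p i a k :=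
            ⟨hane, fun k hk => hp.2 i a f k hpaf (hfav' k hk)⟩
          have hfprop : f ≠ i ∧ ∀ k, k ≠ i → p i f k := ⟨hfne, hfav'⟩
          have : a = f := (huniq a haprop).trans (huniq f hfprop).symm
          subst this
          exact hfA haA
end
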